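/- Let K be a differential operator (a pseudo-differential operator with only nonnegative powers of ∂) and f, g functions. Then the strictly negative part of the commutator satisfies [K, f ∂^{−1} ∘ g]_− = K(f) ∂^{−1} ∘ g − f ∂^{−1} ∘ K*(g), where K(f) denotes the action of K on f and K* the formal adjoint. -/

import Mathlib

/-! STATEMENT 8: For a differential operator `K` (order `≤ bK`, no negative powers of `∂`)
and functions `f, g`, the strictly negative part of the commutator satisfies
`[K, f ∂⁻¹ ∘ g]₋ = K(f) ∂⁻¹ ∘ g − f ∂⁻¹ ∘ K*(g)`.

Pseudo-differential operators are represented by coefficient functions `ℤ → A`;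
`mopCoeff f g` is the coefficient function of `f ∂⁻¹ ∘ g`
(`∂⁻¹ ∘ g = Σ_{l≥0} (−1)^l g^{(l)} ∂^{−1−l}`), `compCoeff` composition,
`adjCoeff` the formal adjoint, and `actC` the action of (the differential part of)
an operator on a function.  The conclusion is stated coefficientwise for all `k < 0`. -/

open Finset

noncomputable section

def gbinom (i : ℤ) (l : ℕ) : ℚ :=
  (∏ t ∈ Finset.range l, ((i : ℚ) - t)) / (Nat.factorial l)

variable {A : Type*} [CommRing A] [Algebra ℚ A]

def compCoeff (d : A → A) (p : ℤ → A) (bp : ℤ) (q : ℤ → A) (bq : ℤ) (k : ℤ) : A :=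
  ∑ i ∈ Finset.Icc (k - bq) bp,
    ∑ l ∈ Finset.range ((i + bq - k).toNat + 1),
      gbinom i l • (p i * d^[l] (q (k - i + l)))

def adjCoeff (d : A → A) (q : ℤ → A) (bq : ℤ) (k : ℤ) : A :=
  ∑ i ∈ Finset.Icc k bq,
    (((-1 : ℚ) ^ i) * gbinom i (i - k).toNat) • d^[(i - k).toNat] (q i)

/-- Coefficient function of the operator `f ∂⁻¹ ∘ g`. -/
def mopCoeff (d : A → A) (f g : A) (k : ℤ) : A :=
  if k < 0 then ((-1 : ℚ) ^ (-1 - k)) • (f * d^[(-1 - k).toNat] g) else 0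

/-- Action of (the differential part of) an operator with coefficients `p`,
of order `≤ b`, on a function `f`: `Σ_{0 ≤ i ≤ b} p_i f^{(i)}`. -/
def actC (d : A → A) (p : ℤ → A) (b : ℕ) (f : A) : A :=
  ∑ i ∈ Finset.range (b + 1), p (i : ℤ) * d^[i] f

/-! Write `K = Σᵢ kᵢ ∂ⁱ`. The negative part of `∂ⁱ ∘ f ∂⁻¹ ∘ g` is `f⁽ⁱ⁾ ∂⁻¹ ∘ g` (an inverse
of the Leibniz rule), hence `(K ∘ f ∂⁻¹ ∘ g)₋ = K(f) ∂⁻¹ ∘ g`. Dually, integrating by parts,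
`∂⁻¹ ∘ u ∂ⁱ` has negative part `(−1)ⁱ ∂⁻¹ ∘ u⁽ⁱ⁾`; with `u = g kᵢ` this gives
`(f ∂⁻¹ ∘ g ∘ K)₋ = f ∂⁻¹ ∘ Σᵢ (−1)ⁱ (g kᵢ)⁽ⁱ⁾ = f ∂⁻¹ ∘ K*(g)`. On coefficients the second fact
is the Leibniz rule, once the binomial coefficients of `∂^(−1−j)` are rewritten as
`binom(−1−j, l) = (−1)ˡ binom(j+l, l)`. -/

theorem Finset.sum_Icc_add_eq_sum_range {M : Type*} [AddCommMonoid M] (a : ℤ) (n : ℕ)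
    (F : ℤ → M) : ∑ i ∈ Icc a (a + n), F i = ∑ t ∈ range (n + 1), F (a + t) := by
  rw [Int.Icc_eq_finset_map, sum_map, show (a + n + 1 - a).toNat = n + 1 by omega]
  rfl

theorem Finset.sum_Icc_sub_eq_sum_range {M : Type*} [AddCommMonoid M] (b : ℤ) (n : ℕ)
    (F : ℤ → M) : ∑ i ∈ Icc (b - n) b, F i = ∑ j ∈ range (n + 1), F (b - j) := by
  rw [← sub_add_cancel b n, add_sub_cancel_right, sum_Icc_add_eq_sum_range, ← sum_range_reflect]
  refine sum_congr rfl fun j hj => ?_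
  rw [mem_range] at hj
  congr 1
  omega

theorem gbinom_eq_choose (i : ℤ) (l : ℕ) : gbinom i l = Ring.choose i l := by
  have h := Ring.descPochhammer_eq_factorial_smul_choose i l
  rw [← Polynomial.eval_eq_smeval, descPochhammer_eval_eq_prod_range, nsmul_eq_mul] at h
  rw [gbinom, div_eq_iff (by positivity), mul_comm]
  exact_mod_cast h

theorem gbinom_natCast (i l : ℕ) : gbinom i l = i.choose l := by
  rw [gbinom_eq_choose, Ring.choose_natCast, Int.cast_natCast]

theorem gbinom_neg_one_sub (j l : ℕ) : gbinom (-1 - j) l = (-1) ^ l * (j + l).choose l := by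
  rw [gbinom_eq_choose, show (-1 - j : ℤ) = -((j + 1 : ℕ) : ℤ) by push_cast; ring,
    Ring.choose_neg, show ((j + 1 : ℕ) : ℤ) + l - 1 = ((j + l : ℕ) : ℤ) by push_cast; ring,
    Ring.choose_natCast]
  simp only [Int.negOnePow_def, zpow_natCast, Units.smul_def, Units.val_pow_eq_pow_val,
    Units.val_neg, Units.val_one, Int.zsmul_eq_mul, Int.cast_mul, Int.cast_pow, Int.cast_neg,
    Int.cast_one, Int.cast_natCast]

namespace Derivation

variable {R S : Type*} [CommRing R] [CommRing S] [Algebra R S] (D : Derivation R S S)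

theorem iterate_map_smul (n : ℕ) (c : R) (x : S) : D^[n] (c • x) = c • D^[n] x := by
  induction n with
  | zero => rfl
  | succ n ih => rw [Function.iterate_succ_apply', ih, map_smul, Function.iterate_succ_apply']

theorem iterate_map_sum {ι : Type*} (n : ℕ) (s : Finset ι) (x : ι → S) :
    D^[n] (∑ i ∈ s, x i) = ∑ i ∈ s, D^[n] (x i) := by
  simpa only [Module.End.coe_pow, coeFn_coe] using map_sum ((D : Module.End R S) ^ n) x s

theorem iterate_leibniz (n : ℕ) (a b : S) :
    D^[n] (a * b) = ∑ i ∈ range (n + 1), n.choose i • (D^[i] a * D^[n - i] b) := by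
  rw [← Nat.sum_antidiagonal_eq_sum_range_succ (fun i j => n.choose i • (D^[i] a * D^[j] b))]
  induction n with
  | zero => simp
  | succ n ih =>
    rw [sum_antidiagonal_choose_succ_nsmul (fun i j => D^[i] a * D^[j] b) n]
    simp only [Function.iterate_succ_apply', ih, map_sum, map_nsmul, leibniz, smul_eq_mul,
      nsmul_add, sum_add_distrib]
    congr 1
    refine sum_congr rfl fun ij hij => ?_
    rw [n.choose_symm_of_eq_add (mem_antidiagonal.1 hij).symm]
    ring

/-- Multiplication by `D^[n] f` is `(ad D)^n` applied to multiplication by `f`, and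
`ad D = mulLeft D - mulRight D` is a sum of commuting operators, so it expands binomially. -/
theorem iterate_mul_eq_sum (n : ℕ) (f h : S) :
    D^[n] f * h =
      ∑ l ∈ range (n + 1), ((-1) ^ (n - l) * n.choose l : R) • D^[l] (f * D^[n - l] h) := by
  set δ : Module.End R S := (D : S →ₗ[R] S)
  set lmul : Module.End R (Module.End R S) := LinearMap.mulLeft R δ
  set negRmul : Module.End R (Module.End R S) := (-1 : R) • LinearMap.mulRight R δ
  have hcomm : Commute lmul negRmul :=
    (LinearMap.commute_mulLeft_right δ δ : Commute lmul (LinearMap.mulRight R δ)).smul_right _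
  have hpow (n : ℕ) (f : S) :
      ((lmul + negRmul) ^ n) (LinearMap.mulLeft R f) = LinearMap.mulLeft R (D^[n] f) := by
    induction n generalizing f with
    | zero => simp
    | succ n ih =>
      ext x
      simp only [pow_succ', Module.End.mul_apply, ih, LinearMap.add_apply,
        LinearMap.mulLeft_apply, LinearMap.smul_apply, LinearMap.mulRight_apply, neg_smul,
        one_smul, coeFn_coe, leibniz, smul_eq_mul, LinearMap.neg_apply,
        Function.iterate_succ_apply', lmul, δ, negRmul]
      ring
  have hexp := congrArg (fun T => T (LinearMap.mulLeft R f) h) (hcomm.add_pow n)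
  simp only [hpow, LinearMap.mulLeft_apply] at hexp
  rw [hexp]
  simp only [lmul, negRmul, smul_pow, LinearMap.pow_mulLeft, LinearMap.pow_mulRight,
    LinearMap.sum_apply, Module.End.mul_apply]
  refine sum_congr rfl fun l _ => ?_
  simp only [Module.End.natCast_apply, LinearMap.smul_apply, LinearMap.mulRight_apply,
    LinearMap.mulLeft_apply, Module.End.mul_apply, Module.End.pow_apply, map_nsmul, δ, coeFn_coe,
    mul_smul, Nat.cast_smul_eq_nsmul]
  rw [iterate_map_smul, smul_comm]

end Derivation

section

variable (d : Derivation ℚ A A)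

theorem mopCoeff_neg_one_sub (f g : A) (m : ℕ) :
    mopCoeff d f g (-1 - m) = (-1 : ℚ) ^ m • (f * d^[m] g) := by
  rw [mopCoeff, if_pos (by omega), show -1 - (-1 - m : ℤ) = m by ring, zpow_natCast,
    Int.toNat_natCast]

theorem sum_choose_iterate_mopCoeff (f g : A) (i N : ℕ) :
    ∑ l ∈ range (i + N + 1), (i.choose l : ℚ) • d^[l] (mopCoeff d f g (-1 - N - i + l)) =
      (-1 : ℚ) ^ N • (d^[i] f * d^[N] g) := by
  rw [d.iterate_mul_eq_sum, smul_sum,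
    ← sum_subset (range_subset_range.2 (by omega : i + 1 ≤ i + N + 1))]
  · refine sum_congr rfl fun l hl => ?_
    rw [mem_range] at hl
    rw [show (-1 - N - i + l : ℤ) = -1 - ((i - l + N : ℕ) : ℤ) by push_cast; omega,
      mopCoeff_neg_one_sub, d.iterate_map_smul, Function.iterate_add_apply, smul_smul, smul_smul,
      pow_add]
    congr 1
    ring
  · intro l _ hl
    rw [mem_range, not_lt] at hl
    rw [Nat.choose_eq_zero_of_lt (by omega), Nat.cast_zero, zero_smul]

theorem compCoeff_mopCoeff_right (kc : ℤ → A) (bK : ℕ) (hneg : ∀ i < 0, kc i = 0) (f g : A)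
    {k : ℤ} (hk : k < 0) :
    compCoeff d kc bK (mopCoeff d f g) (-1) k = mopCoeff d (actC d kc bK f) g k := by
  obtain ⟨N, rfl⟩ : ∃ N : ℕ, k = -1 - N := ⟨(-1 - k).toNat, by omega⟩
  rw [compCoeff, mopCoeff_neg_one_sub, actC, sum_mul, smul_sum,
    ← sum_subset (Icc_subset_Icc (by omega : (-1 - N - -1 : ℤ) ≤ 0) le_rfl)]
  · rw [← zero_add (bK : ℤ), sum_Icc_add_eq_sum_range]
    simp only [zero_add]
    refine sum_congr rfl fun i _ => ?_
    rw [show ((i : ℤ) + -1 - (-1 - N)).toNat = i + N by omega]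
    simp only [gbinom_natCast, ← mul_smul_comm, ← mul_sum, sum_choose_iterate_mopCoeff]
    simp only [mul_smul_comm, mul_assoc]
  · intro i hi hi₀
    rw [mem_Icc] at hi hi₀
    refine sum_eq_zero fun l _ => ?_
    rw [hneg i (by omega), zero_mul, smul_zero]

theorem actC_adjCoeff (kc : ℤ → A) (bK : ℕ) (g : A) :
    actC d (adjCoeff d kc bK) bK g = ∑ n ∈ range (bK + 1), (-1 : ℚ) ^ n • d^[n] (g * kc n) := by
  have h_adj : ∀ i ∈ range (bK + 1), adjCoeff d kc bK i * d^[i] g =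
      ∑ t ∈ range (bK + 1 - i), ((-1 : ℚ) ^ (i + t) * ((i + t).choose t : ℚ)) •
        (d^[i] g * d^[t] (kc (i + t : ℕ))) := by
    intro i hi
    rw [mem_range] at hi
    rw [adjCoeff, show (bK : ℤ) = i + ((bK - i : ℕ) : ℤ) by omega, sum_Icc_add_eq_sum_range,
      sum_mul, show bK - i + 1 = bK + 1 - i by omega]
    refine sum_congr rfl fun t _ => ?_
    rw [show (i + t - i : ℤ) = ((t : ℕ) : ℤ) by ring, Int.toNat_natCast, ← Nat.cast_add,
      gbinom_natCast, zpow_natCast, smul_mul_assoc, mul_comm (d^[t] _)]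
  rw [actC, sum_congr rfl h_adj, ← sum_range_diag_flip]
  refine sum_congr rfl fun n _ => ?_
  rw [d.iterate_leibniz, smul_sum]
  refine sum_congr rfl fun i hi => ?_
  rw [mem_range] at hi
  rw [Nat.add_sub_cancel' (by omega), Nat.choose_symm (by omega), ← Nat.cast_smul_eq_nsmul ℚ,
    smul_smul]

theorem compCoeff_mopCoeff_left (kc : ℤ → A) (bK : ℕ) (hneg : ∀ i < 0, kc i = 0) (f g : A)
    {k : ℤ} (hk : k < 0) :
    compCoeff d (mopCoeff d f g) (-1) kc bK k =
      mopCoeff d f (∑ n ∈ range (bK + 1), (-1 : ℚ) ^ n • d^[n] (g * kc n)) k := by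
  obtain ⟨N, rfl⟩ : ∃ N : ℕ, k = -1 - N := ⟨(-1 - k).toNat, by omega⟩
  set φ : ℕ → ℕ → A := fun j l => ((-1 : ℚ) ^ (j + l) * ((j + l).choose l : ℚ)) •
    (f * (d^[j] g * d^[l] (kc ((j + l : ℕ) - N))))
  have h_inner : ∀ j ∈ range (N + bK + 1),
      ∑ l ∈ range (((-1 - j : ℤ) + bK - (-1 - N)).toNat + 1),
        gbinom (-1 - j) l • (mopCoeff d f g (-1 - j) * d^[l] (kc (-1 - N - (-1 - j) + l))) =
      ∑ l ∈ range (N + bK + 1 - j), φ j l := by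
    intro j hj
    rw [mem_range] at hj
    rw [show ((-1 - j : ℤ) + bK - (-1 - N)).toNat + 1 = N + bK + 1 - j by omega]
    refine sum_congr rfl fun l _ => ?_
    rw [gbinom_neg_one_sub, mopCoeff_neg_one_sub,
      show (-1 - N - (-1 - j) + l : ℤ) = ((j + l : ℕ) : ℤ) - N by push_cast; ring,
      smul_mul_assoc, smul_smul]
    simp only [φ, mul_assoc]
    congr 1
    ring
  rw [compCoeff, show (-1 - N - bK : ℤ) = -1 - ((N + bK : ℕ) : ℤ) by push_cast; ring,
    sum_Icc_sub_eq_sum_range, sum_congr rfl h_inner, ← sum_range_diag_flip, add_assoc,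
    sum_range_add, sum_eq_zero, zero_add]
  · rw [mopCoeff_neg_one_sub, d.iterate_map_sum, mul_sum, smul_sum]
    refine sum_congr rfl fun n _ => ?_
    rw [d.iterate_map_smul, ← Function.iterate_add_apply, d.iterate_leibniz, smul_sum, mul_sum,
      smul_sum]
    refine sum_congr rfl fun j hj => ?_
    rw [mem_range] at hj
    simp only [φ]
    rw [Nat.add_sub_cancel' (by omega), Nat.choose_symm (by omega), Nat.cast_add,
      add_sub_cancel_left, ← Nat.cast_smul_eq_nsmul ℚ]
    simp only [mul_smul_comm, smul_smul]
    congr 1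
    ring
  · intro m hm
    rw [mem_range] at hm
    refine sum_eq_zero fun j hj => ?_
    rw [mem_range] at hj
    simp only [φ]
    rw [hneg _ (by omega), iterate_map_zero, mul_zero, mul_zero, smul_zero]

end

theorem stmt8_general (d : Derivation ℚ A A) (kc : ℤ → A) (bK : ℕ)
    (hneg : ∀ i : ℤ, i < 0 → kc i = 0)
    (f g : A) :
    ∀ k : ℤ, k < 0 →
      compCoeff (fun x => d x) kc bK (mopCoeff (fun x => d x) f g) (-1) k
          - compCoeff (fun x => d x) (mopCoeff (fun x => d x) f g) (-1) kc bK k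
        = mopCoeff (fun x => d x) (actC (fun x => d x) kc bK f) g k
            - mopCoeff (fun x => d x) f
                (actC (fun x => d x) (adjCoeff (fun x => d x) kc bK) bK g) k := by
  intro k hk
  rw [compCoeff_mopCoeff_right d kc bK hneg f g hk, compCoeff_mopCoeff_left d kc bK hneg f g hk,
    actC_adjCoeff]

theorem stmt8 (d : Derivation ℚ A A) (kc : ℤ → A) (bK : ℕ)
    (hneg : ∀ i : ℤ, i < 0 → kc i = 0) (hb : ∀ i : ℤ, (bK : ℤ) < i → kc i = 0)
    (f g : A) :
    ∀ k : ℤ, k < 0 →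
      compCoeff (fun x => d x) kc bK (mopCoeff (fun x => d x) f g) (-1) k
          - compCoeff (fun x => d x) (mopCoeff (fun x => d x) f g) (-1) kc bK k
        = mopCoeff (fun x => d x) (actC (fun x => d x) kc bK f) g k
            - mopCoeff (fun x => d x) f
                (actC (fun x => d x) (adjCoeff (fun x => d x) kc bK) bK g) k :=
  stmt8_general d kc bK hneg f g

end
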